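/- arXiv:1211.1867 — 3 statements merged into one kernel-verified Lean document; each statement's English description precedes it below -/
import Mathlib

section
/- Let δ be an admissible order function on A_n(K). Then the map Λ_δ: ℕ^{2n} → ℤ defined by Λ_δ(α,β) = δ(x^α D^β) is the restriction to ℕ^{2n} of a unique linear form on ℚ^{2n} with integer coefficients (p_1,...,p_n,q_1,...,q_n) satisfying p_i + q_i ≥ 0 for all 1 ≤ i ≤ n. -/
/-! The order function is additive on products, so on a normal monomial `x^α D^β` it is the
linear form with coefficients `pᵢ = δ(xᵢ)`, `qᵢ = δ(Dᵢ)`, which are finite because `xᵢ, Dᵢ ≠ 0`.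
Writing `1 = Dᵢxᵢ - xᵢDᵢ` and using the ultrametric inequality gives `0 = δ(1) ≤ pᵢ + qᵢ`.
Uniqueness: the linear form is read off at the unit vectors. -/

/-- The index set of normal monomials `x^α D^β` of the Weyl algebra `A_n(K)`. -/
abbrev WMon (n : ℕ) := (Fin n → ℕ) × (Fin n → ℕ)

/-- The normal monomial `x^α D^β`. -/
def wmono {A : Type*} [Ring A] {n : ℕ} (x D : Fin n → A) (ab : WMon n) : A :=
  (List.ofFn fun i => x i ^ ab.1 i).prod * (List.ofFn fun i => D i ^ ab.2 i).prod

/-- A presentation of the Weyl algebra `A_n(K)`: an associative `K`-algebra `A` with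
generators `x_i, D_i` satisfying `[x_i,x_j] = [D_i,D_j] = 0`, `[D_i,x_j] = δ_{ij}`,
such that the normal monomials `x^α D^β` form a `K`-basis. -/
structure WeylData (K : Type*) [Field K] (n : ℕ) (A : Type*) [Ring A] [Algebra K A] where
  x : Fin n → A
  D : Fin n → A
  hxx : ∀ i j, x i * x j = x j * x i
  hDD : ∀ i j, D i * D j = D j * D i
  hDx : ∀ i j, D i * x j = x j * D i + (if i = j then 1 else 0)
  basis : Module.Basis (WMon n) K A
  basis_eq : ∀ ab, basis ab = wmono x D ab

/-- The Newton diagram of an operator. -/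
noncomputable def ND {K : Type*} [Field K] {n : ℕ} {A : Type*} [Ring A] [Algebra K A]
    (W : WeylData K n A) (P : A) : Finset (WMon n) := (W.basis.repr P).support

/-- An order function on the Weyl algebra, with values in `ℤ ∪ {-∞} = WithBot ℤ`. -/
structure IsOrderFunction (K : Type*) [Field K] {A : Type*} [Ring A] [Algebra K A]
    (δ : A → WithBot ℤ) : Prop where
  scalar : ∀ c : K, c ≠ 0 → δ (algebraMap K A c) = 0
  bot_iff : ∀ P : A, δ P = ⊥ ↔ P = 0
  add_le : ∀ P Q : A, δ (P + Q) ≤ max (δ P) (δ Q)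
  mul : ∀ P Q : A, δ (P * Q) = δ P + δ Q

/-- An admissible order function: an order function such that `δ(P)` is the maximum of
`δ(x^α D^β)` over the Newton diagram of `P`. -/
def IsAdmissible {K : Type*} [Field K] {n : ℕ} {A : Type*} [Ring A] [Algebra K A]
    (W : WeylData K n A) (δ : A → WithBot ℤ) : Prop :=
  IsOrderFunction K δ ∧
    ∀ P : A, P ≠ 0 → δ P = (ND W P).sup fun ab => δ (wmono W.x W.D ab)

/-- A well monomial ordering: an irreflexive, transitive, total relation, compatible with
addition, which is a well-ordering. -/
def WellMonomialOrdering {σ : Type*} [AddCommMonoid σ] (r : σ → σ → Prop) : Prop :=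
  (∀ a, ¬ r a a) ∧ (∀ a b c, r a b → r b c → r a c) ∧
    (∀ a b, a ≠ b → r a b ∨ r b a) ∧
    (∀ a b c, r a b → r (a + c) (b + c)) ∧ WellFounded r

/-- The monomial ordering `≺_δ` refining the admissible order function `δ` by a fixed
monomial ordering `r`. -/
def rdelta {K : Type*} [Field K] {n : ℕ} {A : Type*} [Ring A] [Algebra K A]
    (W : WeylData K n A) (δ : A → WithBot ℤ) (r : WMon n → WMon n → Prop) :
    WMon n → WMon n → Prop := fun a b =>
  δ (wmono W.x W.D a) < δ (wmono W.x W.D b) ∨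
    (δ (wmono W.x W.D a) = δ (wmono W.x W.D b) ∧ r a b)

/-- `e` is the maximal element (exponent) of the Newton diagram of `P` w.r.t. `rd`. -/
def IsExp {K : Type*} [Field K] {n : ℕ} {A : Type*} [Ring A] [Algebra K A]
    (W : WeylData K n A) (rd : WMon n → WMon n → Prop) (P : A) (e : WMon n) : Prop :=
  e ∈ ND W P ∧ ∀ f ∈ ND W P, f ≠ e → rd f e

/-- Index set of monomials `t^k x^α D^β` of the homogenised Weyl algebra. -/
abbrev HMon (n : ℕ) := ℕ × WMon n

/-- A presentation of the homogenised Weyl algebra `A_n[t]`: generators `t, x_i, D_i` with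
`t` commuting with the `x_i, D_i`, `[x_i,x_j] = [D_i,D_j] = 0`, `[D_i,x_j] = δ_{ij} t²`,
and the monomials `t^k x^α D^β` forming a `K`-basis. -/
structure HWeylData (K : Type*) [Field K] (n : ℕ) (B : Type*) [Ring B] [Algebra K B] where
  t : B
  x : Fin n → B
  D : Fin n → B
  htx : ∀ i, t * x i = x i * t
  htD : ∀ i, t * D i = D i * t
  hxx : ∀ i j, x i * x j = x j * x i
  hDD : ∀ i j, D i * D j = D j * D i
  hDx : ∀ i j, D i * x j = x j * D i + (if i = j then t ^ 2 else 0)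
  basis : Module.Basis (HMon n) K B
  basis_eq : ∀ v, basis v = t ^ v.1 * wmono x D v.2

/-- Total degree `|α| + |β|` of a monomial of the Weyl algebra. -/
def wdeg {n : ℕ} (ab : WMon n) : ℕ := (∑ i, ab.1 i) + (∑ i, ab.2 i)

/-- The total order `ord^T(P)` of an operator `P`. -/
noncomputable def ordT {K : Type*} [Field K] {n : ℕ} {A : Type*} [Ring A] [Algebra K A]
    (W : WeylData K n A) (P : A) : ℕ := (ND W P).sup wdeg

/-- The Newton diagram of an element of the homogenised Weyl algebra. -/
noncomputable def NDH {K : Type*} [Field K] {n : ℕ} {B : Type*} [Ring B] [Algebra K B]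
    (V : HWeylData K n B) (H : B) : Finset (HMon n) := (V.basis.repr H).support

/-- The homogenisation `h(P) = Σ p_{αβ} t^{ord^T(P)-|α|-|β|} x^α D^β` of an operator. -/
noncomputable def homog {K : Type*} [Field K] {n : ℕ} {A B : Type*} [Ring A] [Algebra K A]
    [Ring B] [Algebra K B] (W : WeylData K n A) (V : HWeylData K n B) (P : A) : B :=
  ∑ ab ∈ ND W P,
    W.basis.repr P ab • (V.t ^ (ordT W P - wdeg ab) * wmono V.x V.D ab)

/-- The dehomogenisation `H|_{t=1}` of an element of the homogenised Weyl algebra. -/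
noncomputable def dehom {K : Type*} [Field K] {n : ℕ} {A B : Type*} [Ring A] [Algebra K A]
    [Ring B] [Algebra K B] (W : WeylData K n A) (V : HWeylData K n B) (H : B) : A :=
  ∑ v ∈ NDH V H, V.basis.repr H v • wmono W.x W.D v.2

/-- `H` is homogeneous of degree `d` in `A_n[t]` (degree of `t^k x^α D^β` is `k+|α|+|β|`). -/
def IsHomogOfDeg {K : Type*} [Field K] {n : ℕ} {B : Type*} [Ring B] [Algebra K B]
    (V : HWeylData K n B) (H : B) (d : ℕ) : Prop :=
  ∀ v ∈ NDH V H, v.1 + wdeg v.2 = d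

/-- Total degree of a monomial of `A_n[t]`. -/
def hdeg {n : ℕ} (v : HMon n) : ℕ := v.1 + wdeg v.2

/-- The well monomial ordering `⊲` on `ℕ^{2n+1}`: compare first by total degree
`k + |α| + |β|`, then by `≺_δ` on `(α,β)`. -/
def rT {K : Type*} [Field K] {n : ℕ} {A : Type*} [Ring A] [Algebra K A]
    (W : WeylData K n A) (δ : A → WithBot ℤ) (r : WMon n → WMon n → Prop) :
    HMon n → HMon n → Prop := fun a b =>
  hdeg a < hdeg b ∨ (hdeg a = hdeg b ∧ rdelta W δ r a.2 b.2)

/-- `E` is the maximal element of the Newton diagram of `H ∈ A_n[t]` w.r.t. `rd`. -/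
def IsExpH {K : Type*} [Field K] {n : ℕ} {B : Type*} [Ring B] [Algebra K B]
    (V : HWeylData K n B) (rd : HMon n → HMon n → Prop) (H : B) (E : HMon n) : Prop :=
  E ∈ NDH V H ∧ ∀ F ∈ NDH V H, F ≠ E → rd F E

/-- The translated cone `e + ℕ^{2n+1}`. -/
def expCone {n : ℕ} (e : HMon n) : Set (HMon n) := {v | ∃ γ, v = e + γ}

def linearForm {n : ℕ} (pq : (Fin n → ℤ) × (Fin n → ℤ)) (ab : WMon n) : ℤ :=
  (∑ i, pq.1 i * (ab.1 i : ℤ)) + ∑ i, pq.2 i * (ab.2 i : ℤ)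

theorem linearForm_single_fst {n : ℕ} (pq : (Fin n → ℤ) × (Fin n → ℤ)) (i : Fin n) :
    linearForm pq (Pi.single i 1, 0) = pq.1 i := by
  simp [linearForm, Pi.single_apply]

theorem linearForm_single_snd {n : ℕ} (pq : (Fin n → ℤ) × (Fin n → ℤ)) (i : Fin n) :
    linearForm pq (0, Pi.single i 1) = pq.2 i := by
  simp [linearForm, Pi.single_apply]

theorem linearForm_injective {n : ℕ} : Function.Injective (linearForm (n := n)) := by
  intro pq pq' h
  ext i
  · rw [← linearForm_single_fst pq, ← linearForm_single_fst pq', h]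
  · rw [← linearForm_single_snd pq, ← linearForm_single_snd pq', h]

namespace IsOrderFunction

variable {K : Type*} [Field K] {A : Type*} [Ring A] [Algebra K A] {δ : A → WithBot ℤ}

theorem map_one (hδ : IsOrderFunction K δ) : δ 1 = 0 := by
  simpa using hδ.scalar 1 one_ne_zero

theorem map_neg (hδ : IsOrderFunction K δ) (P : A) : δ (-P) = δ P := by
  have h : -P = algebraMap K A (-1) * P := by simp
  rw [h, hδ.mul, hδ.scalar _ (neg_ne_zero.2 one_ne_zero), zero_add]

theorem exists_eq_coe (hδ : IsOrderFunction K δ) {P : A} (hP : P ≠ 0) : ∃ z : ℤ, δ P = z :=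
  WithBot.ne_bot_iff_exists.1 (mt (hδ.bot_iff P).1 hP) |>.imp fun _ => Eq.symm

theorem map_pow (hδ : IsOrderFunction K δ) (P : A) (k : ℕ) : δ (P ^ k) = k • δ P := by
  induction k with
  | zero => simpa using hδ.map_one
  | succ k ih => rw [pow_succ, hδ.mul, ih, succ_nsmul]

theorem map_prod_ofFn (hδ : IsOrderFunction K δ) {m : ℕ} (f : Fin m → A) :
    δ (List.ofFn f).prod = ∑ i, δ (f i) := by
  induction m with
  | zero => simpa using hδ.map_one
  | succ m ih => rw [List.ofFn_succ, List.prod_cons, hδ.mul, ih, Fin.sum_univ_succ]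

theorem map_wmono (hδ : IsOrderFunction K δ) {n : ℕ} {x D : Fin n → A} {p q : Fin n → ℤ}
    (hx : ∀ i, δ (x i) = p i) (hD : ∀ i, δ (D i) = q i) (ab : WMon n) :
    δ (wmono x D ab) = linearForm (p, q) ab := by
  simp only [wmono, hδ.mul, hδ.map_prod_ofFn, hδ.map_pow, hx, hD, ← WithBot.coe_nsmul,
    ← WithBot.coe_sum, ← WithBot.coe_add, linearForm, nsmul_eq_mul, mul_comm]

theorem zero_le_add_of_mul_eq_mul_add_one (hδ : IsOrderFunction K δ) {x D : A}
    (h : D * x = x * D + 1) : 0 ≤ δ x + δ D :=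
  calc 0 = δ 1 := hδ.map_one.symm
    _ = δ (D * x + -(x * D)) := by rw [h]; abel_nf
    _ ≤ max (δ (D * x)) (δ (-(x * D))) := hδ.add_le _ _
    _ = δ x + δ D := by rw [hδ.map_neg, hδ.mul, hδ.mul, add_comm, max_self]

end IsOrderFunction

namespace WeylData

variable {K : Type*} [Field K] {n : ℕ} {A : Type*} [Ring A] [Algebra K A]

theorem nontrivial (W : WeylData K n A) : Nontrivial A :=
  ⟨W.basis (0, 0), 0, W.basis.ne_zero _⟩

theorem D_mul_x_self (W : WeylData K n A) (i : Fin n) : W.D i * W.x i = W.x i * W.D i + 1 := by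
  simpa using W.hDx i i

theorem x_ne_zero (W : WeylData K n A) (i : Fin n) : W.x i ≠ 0 := by
  have := W.nontrivial
  intro h
  simpa [h] using W.D_mul_x_self i

theorem D_ne_zero (W : WeylData K n A) (i : Fin n) : W.D i ≠ 0 := by
  have := W.nontrivial
  intro h
  simpa [h] using W.D_mul_x_self i

end WeylData

/-- the map `Λ_δ(α,β) = δ(x^α D^β)` associated to an admissible order
function is the restriction to `ℕ^{2n}` of a unique linear form on `ℚ^{2n}` with integer
coefficients `(p₁,…,pₙ,q₁,…,qₙ)` satisfying `pᵢ + qᵢ ≥ 0`. -/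
theorem admissible_linear_form (K : Type*) [Field K] (n : ℕ) (A : Type*) [Ring A]
    [Algebra K A] (W : WeylData K n A) (δ : A → WithBot ℤ) (hδ : IsAdmissible W δ) :
    ∃! pq : (Fin n → ℤ) × (Fin n → ℤ),
      (∀ i, 0 ≤ pq.1 i + pq.2 i) ∧
      ∀ ab : WMon n, δ (wmono W.x W.D ab) =
        (((∑ i, pq.1 i * (ab.1 i : ℤ)) + ∑ i, pq.2 i * (ab.2 i : ℤ) : ℤ) : WithBot ℤ) := by
  obtain ⟨hof, -⟩ := hδ
  choose p hp using fun i => hof.exists_eq_coe (W.x_ne_zero i)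
  choose q hq using fun i => hof.exists_eq_coe (W.D_ne_zero i)
  have hΛ : ∀ ab, δ (wmono W.x W.D ab) = linearForm (p, q) ab := hof.map_wmono hp hq
  refine ⟨(p, q), ⟨fun i => ?_, hΛ⟩, fun pq' ⟨_, hΛ'⟩ => ?_⟩
  · have h := hof.zero_le_add_of_mul_eq_mul_add_one (W.D_mul_x_self i)
    rw [hp, hq] at h
    exact_mod_cast h
  · exact linearForm_injective <| funext fun ab =>
      WithBot.coe_injective <| (hΛ' ab).symm.trans (hΛ ab)
end

section
/- Let Λ: ℚ^{2n} → ℚ be a linear form with integer coefficients (p_1,...,p_n,q_1,...,q_n) satisfying p_i + q_i ≥ 0 for all i. Then there exists a unique admissible order function δ_Λ: A_n(K) → ℤ ∪ {-∞} such that δ_Λ(x^α D^β) = Λ(α,β) for all (α,β) ∈ ℕ^{2n}; it is given by δ_Λ(0) = -∞ and δ_Λ(P) = max{Λ(α,β) : (α,β) ∈ N(P)} for nonzero P. -/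
/-!
Admissibility forces `δ(P) = max {δ(x^α D^β) : (α,β) ∈ N(P)}`, which gives uniqueness and the
formula; the content is that `δ_Λ(P) = max_{N(P)} Λ` is multiplicative. Refine `Λ` to an injective
additive total order `φ` on exponents by breaking ties lexicographically. Moving a `D_i` past an
`x_i` creates the extra term from `[D_i, x_i] = 1`, whose exponent is smaller by `(eᵢ, eᵢ)`, and
`φ(eᵢ, eᵢ) > 0` because `Λ(eᵢ, eᵢ) = pᵢ + qᵢ ≥ 0`. Hence `x^a D^b · x^c D^d` is `x^(a+c) D^(b+d)`
plus `φ`-smaller terms, so the `φ`-leading exponent of `P Q` is the sum of those of `P` and `Q`,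
and `δ_Λ` of an operator is `Λ` of its `φ`-leading exponent.
-/

section PowProd

variable {M : Type*} [Monoid M] {n : ℕ}

def powProd (f : Fin n → M) (α : Fin n → ℕ) : M := (List.ofFn fun i => f i ^ α i).prod

variable {f : Fin n → M}

theorem powProd_eq_noncommProd (hf : ∀ i j, Commute (f i) (f j)) (α : Fin n → ℕ) :
    powProd f α = Finset.univ.noncommProd (fun i => f i ^ α i)
      (Pairwise.set_pairwise (fun i j _ => (hf i j).pow_pow (α i) (α j)) _) := by
  unfold powProd Finset.noncommProd
  simp only [Fin.univ_val_map, Multiset.noncommProd_coe]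

theorem powProd_eq_pow_mul_update (hf : ∀ i j, Commute (f i) (f j)) (α : Fin n → ℕ) (i : Fin n) :
    powProd f α = f i ^ α i * powProd f (Function.update α i 0) := by
  classical
  rw [powProd_eq_noncommProd hf, powProd_eq_noncommProd hf,
    ← Finset.mul_noncommProd_erase _ (Finset.mem_univ i),
    ← Finset.mul_noncommProd_erase _ (Finset.mem_univ i), Function.update_self, pow_zero, one_mul]
  congr 1
  refine Finset.noncommProd_congr rfl (fun j hj => ?_) _
  rw [Function.update_of_ne (Finset.ne_of_mem_erase hj)]

theorem commute_powProd {a : M} {α : Fin n → ℕ} (h : ∀ j, α j ≠ 0 → Commute a (f j)) :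
    Commute a (powProd f α) := by
  refine Commute.list_prod_right _ _ fun b hb => ?_
  obtain ⟨j, rfl⟩ := List.mem_ofFn.mp hb
  by_cases hj : α j = 0
  · simp [hj]
  · exact (h j hj).pow_right _

theorem mul_powProd (hf : ∀ i j, Commute (f i) (f j)) (α : Fin n → ℕ) (i : Fin n) :
    f i * powProd f α = powProd f (Pi.single i 1 + α) := by
  rw [powProd_eq_pow_mul_update hf (Pi.single i 1 + α) i, powProd_eq_pow_mul_update hf α i,
    ← mul_assoc, ← pow_succ']
  congr 2
  · simp [add_comm]
  · funext j
    by_cases hj : j = i <;> simp [hj]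

end PowProd

namespace WeylData

variable {K : Type*} [Field K] {n : ℕ} {A : Type*} [Ring A] [Algebra K A] (W : WeylData K n A)

theorem wmono_eq_powProd (c : WMon n) : wmono W.x W.D c = powProd W.x c.1 * powProd W.D c.2 :=
  rfl

theorem wmono_zero : wmono W.x W.D 0 = 1 := by
  simp [wmono]

theorem D_mul_x_pow (i : Fin n) (k : ℕ) :
    W.D i * W.x i ^ k = W.x i ^ k * W.D i + k • W.x i ^ (k - 1) := by
  induction k with
  | zero => simp
  | succ k ih =>
    have hDx : W.D i * W.x i = W.x i * W.D i + 1 := by simpa using W.hDx i i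
    rcases k with _ | k
    · simpa using hDx
    calc W.D i * W.x i ^ (k + 2) = (W.D i * W.x i ^ (k + 1)) * W.x i := by
          rw [mul_assoc, ← pow_succ]
      _ = W.x i ^ (k + 1) * (W.D i * W.x i) + (k + 1) • W.x i ^ (k + 1) := by
        rw [ih, add_mul, mul_assoc, smul_mul_assoc, ← pow_succ]; simp
      _ = W.x i ^ (k + 2) * W.D i + (k + 2) • W.x i ^ (k + 1) := by
        rw [hDx, mul_add, mul_one, ← mul_assoc, ← pow_succ, add_assoc, ← succ_nsmul']

theorem D_mul_powProd_x (i : Fin n) (α : Fin n → ℕ) :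
    W.D i * powProd W.x α = powProd W.x α * W.D i + α i • powProd W.x (α - Pi.single i 1) := by
  have hcomm : Commute (W.D i) (powProd W.x (Function.update α i 0)) := by
    refine commute_powProd fun j hj => ?_
    have hji : i ≠ j := by rintro rfl; simp at hj
    exact (by simpa [hji] using W.hDx i j : W.D i * W.x j = W.x j * W.D i)
  rw [powProd_eq_pow_mul_update W.hxx α i, powProd_eq_pow_mul_update W.hxx (α - _) i,
    ← mul_assoc, D_mul_x_pow, add_mul, mul_assoc, hcomm.eq, ← mul_assoc, smul_mul_assoc]
  congr 4
  · simp
  · funext j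
    by_cases hj : j = i <;> simp [hj]

theorem x_mul_wmono (i : Fin n) (c : WMon n) :
    W.x i * wmono W.x W.D c = wmono W.x W.D ((Pi.single i 1, 0) + c) := by
  simp only [wmono_eq_powProd, ← mul_assoc, mul_powProd W.hxx, Prod.fst_add, Prod.snd_add, zero_add]

theorem D_mul_wmono (i : Fin n) (c : WMon n) :
    W.D i * wmono W.x W.D c = wmono W.x W.D ((0, Pi.single i 1) + c)
      + c.1 i • wmono W.x W.D (c.1 - Pi.single i 1, c.2) := by
  rw [wmono_eq_powProd, wmono_eq_powProd, wmono_eq_powProd, ← mul_assoc, D_mul_powProd_x, add_mul,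
    mul_assoc, mul_powProd W.hDD, smul_mul_assoc]
  simp

variable {Γ : Type*} [AddCommMonoid Γ] [LinearOrder Γ]
variable (φ : WMon n →+ Γ)

def spanLT (g : Γ) : Submodule K A := Submodule.span K (W.basis '' {c | φ c < g})

def spanLE (g : Γ) : Submodule K A := Submodule.span K (W.basis '' {c | φ c ≤ g})

variable {W φ}

theorem spanLT_mono {g h : Γ} (hgh : g ≤ h) : W.spanLT φ g ≤ W.spanLT φ h :=
  Submodule.span_mono <| Set.image_mono fun _ hc => lt_of_lt_of_le hc hgh

theorem basis_mem_spanLT {c : WMon n} {g : Γ} (hc : φ c < g) : W.basis c ∈ W.spanLT φ g :=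
  Submodule.subset_span ⟨c, hc, rfl⟩

theorem basis_mem_spanLE {c : WMon n} {g : Γ} (hc : φ c ≤ g) : W.basis c ∈ W.spanLE φ g :=
  Submodule.subset_span ⟨c, hc, rfl⟩

theorem repr_eq_zero_of_mem_spanLT {y : A} {g : Γ} (hy : y ∈ W.spanLT φ g) {c : WMon n}
    (hc : g ≤ φ c) : W.basis.repr y c = 0 := by
  by_contra h
  exact (hc.trans_lt ((W.basis.mem_span_image.mp hy) (Finsupp.mem_support_iff.mpr h))).false

theorem isExp_of_sub_smul_mem {P : A} {a : WMon n} {r : K} (hr : r ≠ 0)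
    (h : P - r • W.basis a ∈ W.spanLT φ (φ a)) : IsExp W (InvImage (· < ·) φ) P a := by
  have hrepr (c : WMon n) : W.basis.repr P c
      = Finsupp.single a r c + W.basis.repr (P - r • W.basis a) c := by
    simp
  refine ⟨?_, fun c hc hca => ?_⟩
  · rw [ND, Finsupp.mem_support_iff, hrepr, repr_eq_zero_of_mem_spanLT h le_rfl]
    simpa using hr
  · rw [ND, Finsupp.mem_support_iff, hrepr, Finsupp.single_eq_of_ne hca, zero_add] at hc
    exact W.basis.mem_span_image.mp h (Finsupp.mem_support_iff.mpr hc)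

theorem exists_isExp (hinj : Function.Injective φ) {P : A} (hP : P ≠ 0) :
    ∃ a, IsExp W (InvImage (· < ·) φ) P a := by
  have hne : (ND W P).Nonempty := Finsupp.support_nonempty_iff.mpr (by simpa using hP)
  obtain ⟨a, ha, hmax⟩ := (ND W P).exists_max_image φ hne
  exact ⟨a, ha, fun c hc hca => (hmax c hc).lt_of_ne (hinj.ne hca)⟩

variable (W φ) in
def IsLeadingMul (m : A) (e : WMon n) : Prop :=
  ∀ c, m * W.basis c - W.basis (e + c) ∈ W.spanLT φ (φ (e + c))

theorem isLeadingMul_one : W.IsLeadingMul φ 1 0 := fun c => by simp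

theorem isLeadingMul_x (i : Fin n) : W.IsLeadingMul φ (W.x i) (Pi.single i 1, 0) := fun c => by
  simp [W.basis_eq, x_mul_wmono]

variable [IsOrderedCancelAddMonoid Γ]

namespace IsLeadingMul

variable {m m' : A} {e e' : WMon n}

theorem mul_mem_spanLT (h : W.IsLeadingMul φ m e) {y : A} {g : Γ} (hy : y ∈ W.spanLT φ g) :
    m * y ∈ W.spanLT φ (φ e + g) := by
  refine Submodule.span_induction (p := fun y _ => m * y ∈ W.spanLT φ (φ e + g)) ?_
    (by simp) (fun _ _ _ _ h₁ h₂ => by rw [mul_add]; exact add_mem h₁ h₂)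
    (fun k _ _ h => by rw [mul_smul_comm]; exact Submodule.smul_mem _ k h) hy
  rintro _ ⟨c, hc, rfl⟩
  have hlt : φ (e + c) < φ e + g := by rw [map_add]; exact (add_lt_add_iff_left _).mpr hc
  simpa using add_mem (spanLT_mono hlt.le (h c)) (basis_mem_spanLT hlt)

theorem mul (h : W.IsLeadingMul φ m e) (h' : W.IsLeadingMul φ m' e') :
    W.IsLeadingMul φ (m * m') (e + e') := by
  intro c
  have key : m * m' * W.basis c - W.basis (e + e' + c) = m * (m' * W.basis c - W.basis (e' + c))
      + (m * W.basis (e' + c) - W.basis (e + (e' + c))) := by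
    rw [mul_sub, add_assoc e]; noncomm_ring
  rw [key, add_assoc e, map_add φ e]
  exact add_mem (h.mul_mem_spanLT (h' c)) (by rw [← map_add]; exact h (e' + c))

theorem pow (h : W.IsLeadingMul φ m e) (k : ℕ) : W.IsLeadingMul φ (m ^ k) (k • e) := by
  induction k with
  | zero => simpa using isLeadingMul_one
  | succ k ih => rw [pow_succ, succ_nsmul]; exact ih.mul h

theorem ofFn_prod {l : ℕ} {f : Fin l → A} {e : Fin l → WMon n}
    (h : ∀ i, W.IsLeadingMul φ (f i) (e i)) : W.IsLeadingMul φ (List.ofFn f).prod (∑ i, e i) := by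
  induction l with
  | zero => simpa using isLeadingMul_one
  | succ l ih =>
    rw [List.ofFn_succ, List.prod_cons, Fin.sum_univ_succ]
    exact (h 0).mul (ih fun i => h i.succ)

end IsLeadingMul

theorem isLeadingMul_D (hφ : ∀ i, 0 < φ (Pi.single i 1, Pi.single i 1)) (i : Fin n) :
    W.IsLeadingMul φ (W.D i) (0, Pi.single i 1) := fun c => by
  rw [W.basis_eq, W.basis_eq, D_mul_wmono, add_sub_cancel_left, ← W.basis_eq]
  rcases Nat.eq_zero_or_pos (c.1 i) with hci | hci
  · simp [hci]
  refine nsmul_mem (basis_mem_spanLT ?_) _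
  have hc : (0, Pi.single i 1) + c
      = (c.1 - Pi.single i 1, c.2) + (Pi.single i 1, Pi.single i 1) := by
    ext j
    · by_cases hj : j = i
      · subst hj; simp; omega
      · simp [hj]
    · simp [add_comm]
  rw [hc, map_add]
  exact lt_add_of_pos_right _ (hφ i)

theorem isLeadingMul_wmono (hφ : ∀ i, 0 < φ (Pi.single i 1, Pi.single i 1)) (c : WMon n) :
    W.IsLeadingMul φ (wmono W.x W.D c) c := by
  have h := (IsLeadingMul.ofFn_prod fun i => (isLeadingMul_x (W := W) (φ := φ) i).pow (c.1 i)).mul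
    (IsLeadingMul.ofFn_prod fun i => (isLeadingMul_D hφ i).pow (c.2 i))
  convert h using 1
  · rfl
  ext j <;> simp [Prod.fst_sum, Prod.snd_sum, Finset.sum_apply, Pi.single_apply]

theorem basis_mul_basis_sub_mem_spanLT (hφ : ∀ i, 0 < φ (Pi.single i 1, Pi.single i 1))
    (a b : WMon n) :
    W.basis a * W.basis b - W.basis (a + b) ∈ W.spanLT φ (φ (a + b)) := by
  simpa only [W.basis_eq] using isLeadingMul_wmono (W := W) hφ a b

theorem span_mul_span_le_spanLT (hφ : ∀ i, 0 < φ (Pi.single i 1, Pi.single i 1))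
    {S T : Set (WMon n)} {g : Γ} (hST : ∀ a ∈ S, ∀ b ∈ T, φ (a + b) < g) :
    Submodule.span K (W.basis '' S) * Submodule.span K (W.basis '' T) ≤ W.spanLT φ g := by
  rw [Submodule.span_mul_span K, Submodule.span_le]
  rintro _ ⟨_, ⟨a, ha, rfl⟩, _, ⟨b, hb, rfl⟩, rfl⟩
  have hlt := hST a ha b hb
  simpa using add_mem (spanLT_mono hlt.le (basis_mul_basis_sub_mem_spanLT hφ a b))
    (basis_mem_spanLT hlt)

theorem spanLT_mul_spanLE_le (hφ : ∀ i, 0 < φ (Pi.single i 1, Pi.single i 1)) (g h : Γ) :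
    W.spanLT φ g * W.spanLE φ h ≤ W.spanLT φ (g + h) :=
  span_mul_span_le_spanLT hφ fun a ha b hb => by
    rw [map_add]; exact add_lt_add_of_lt_of_le ha hb

theorem spanLE_mul_spanLT_le (hφ : ∀ i, 0 < φ (Pi.single i 1, Pi.single i 1)) (g h : Γ) :
    W.spanLE φ g * W.spanLT φ h ≤ W.spanLT φ (g + h) :=
  span_mul_span_le_spanLT hφ fun a ha b hb => by
    rw [map_add]; exact add_lt_add_of_le_of_lt ha hb

end WeylData

namespace IsExp

open WeylData

variable {K : Type*} [Field K] {n : ℕ} {A : Type*} [Ring A] [Algebra K A] {W : WeylData K n A}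
variable {Γ : Type*} [AddCommMonoid Γ] [LinearOrder Γ] {φ : WMon n →+ Γ}
variable {P Q : A} {a b : WMon n}

theorem sub_smul_mem_spanLT (h : IsExp W (InvImage (· < ·) φ) P a) :
    P - W.basis.repr P a • W.basis a ∈ W.spanLT φ (φ a) := by
  refine W.basis.mem_span_image.mpr fun c hc => ?_
  rw [Finset.mem_coe, Finsupp.mem_support_iff] at hc
  by_cases hca : c = a
  · subst hca; simp at hc
  · simp only [map_sub, map_smul, Module.Basis.repr_self, Finsupp.coe_sub, Pi.sub_apply,
      Finsupp.smul_apply, Finsupp.single_eq_of_ne hca, smul_zero, sub_zero] at hc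
    exact h.2 c (Finsupp.mem_support_iff.mpr hc) hca

theorem mem_spanLE (h : IsExp W (InvImage (· < ·) φ) P a) : P ∈ W.spanLE φ (φ a) := by
  refine W.basis.mem_span_image.mpr fun c hc => ?_
  by_cases hca : c = a
  · exact hca ▸ le_rfl
  · exact (h.2 c hc hca).le

variable [IsOrderedCancelAddMonoid Γ]

theorem mul (hφ : ∀ i, 0 < φ (Pi.single i 1, Pi.single i 1))
    (hP : IsExp W (InvImage (· < ·) φ) P a) (hQ : IsExp W (InvImage (· < ·) φ) Q b) :
    IsExp W (InvImage (· < ·) φ) (P * Q) (a + b) := by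
  set r := W.basis.repr P a
  set s := W.basis.repr Q b
  have hr : r ≠ 0 := Finsupp.mem_support_iff.mp hP.1
  have hs : s ≠ 0 := Finsupp.mem_support_iff.mp hQ.1
  refine isExp_of_sub_smul_mem (mul_ne_zero hr hs) ?_
  have hsplit : P * Q - (r * s) • W.basis (a + b) = (P - r • W.basis a) * Q
      + r • (W.basis a * (Q - s • W.basis b))
      + (r * s) • (W.basis a * W.basis b - W.basis (a + b)) := by
    simp only [sub_mul, mul_sub, smul_sub, smul_mul_assoc, mul_smul_comm, smul_smul]
    abel
  rw [hsplit, map_add]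
  refine add_mem (add_mem ?_ (Submodule.smul_mem _ _ ?_)) (Submodule.smul_mem _ _ ?_)
  · exact spanLT_mul_spanLE_le hφ _ _ (Submodule.mul_mem_mul hP.sub_smul_mem_spanLT hQ.mem_spanLE)
  · exact spanLE_mul_spanLT_le hφ _ _
      (Submodule.mul_mem_mul (basis_mem_spanLE le_rfl) hQ.sub_smul_mem_spanLT)
  · rw [← map_add]
    exact basis_mul_basis_sub_mem_spanLT hφ a b

end IsExp

section LexRefine

variable {n : ℕ}

def lexRefine (Λ : WMon n →+ ℤ) : WMon n →+ ℤ ×ₗ (Lex (Fin n → ℕ) ×ₗ Lex (Fin n → ℕ)) where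
  toFun c := toLex (Λ c, toLex (toLex c.1, toLex c.2))
  map_zero' := by simp
  map_add' a b := by simp only [map_add, Prod.fst_add, Prod.snd_add]; rfl

variable (Λ : WMon n →+ ℤ)

theorem lexRefine_injective : Function.Injective (lexRefine Λ) := fun a b h => by
  simp only [lexRefine, AddMonoidHom.coe_mk, ZeroHom.coe_mk, toLex_inj, Prod.mk.injEq] at h
  exact Prod.ext h.2.1 h.2.2

theorem le_of_lexRefine_le {a b : WMon n} (h : lexRefine Λ a ≤ lexRefine Λ b) : Λ a ≤ Λ b :=
  Prod.Lex.monotone_fst _ _ h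

theorem lexRefine_pos {i : Fin n} (hΛ : 0 ≤ Λ (Pi.single i 1, Pi.single i 1)) :
    0 < lexRefine Λ (Pi.single i 1, Pi.single i 1) := by
  have hα : (toLex 0 : Lex (Fin n → ℕ)) < toLex (Pi.single i 1) :=
    Pi.toLex_strictMono (Pi.lt_def.mpr ⟨by simp, i, by simp⟩)
  rcases hΛ.lt_or_eq with hlt | heq
  · exact Prod.Lex.toLex_lt_toLex.mpr (Or.inl hlt)
  · exact Prod.Lex.toLex_lt_toLex.mpr (Or.inr ⟨heq, Prod.Lex.toLex_lt_toLex.mpr (Or.inl hα)⟩)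

end LexRefine

namespace WeylData

variable {K : Type*} [Field K] {n : ℕ} {A : Type*} [Ring A] [Algebra K A] (W : WeylData K n A)
variable (Λ : WMon n →+ ℤ)

/-- The order function `δ_Λ`. -/
noncomputable def orderFn (P : A) : WithBot ℤ := (ND W P).sup fun c => ((Λ c : ℤ) : WithBot ℤ)

variable {W Λ}

theorem orderFn_eq_of_isExp {P : A} {a : WMon n}
    (h : IsExp W (InvImage (· < ·) (lexRefine Λ)) P a) :
    W.orderFn Λ P = Λ a := by
  refine le_antisymm (Finset.sup_le fun c hc => ?_)
    (Finset.le_sup (f := fun c => ((Λ c : ℤ) : WithBot ℤ)) h.1)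
  by_cases hca : c = a
  · rw [hca]
  · exact WithBot.coe_le_coe.mpr (le_of_lexRefine_le Λ (h.2 c hc hca).le)

theorem orderFn_wmono (c : WMon n) : W.orderFn Λ (wmono W.x W.D c) = Λ c := by
  rw [orderFn, ND, ← W.basis_eq, W.basis.repr_self, Finsupp.support_single _ one_ne_zero,
    Finset.sup_singleton]

theorem orderFn_zero : W.orderFn Λ 0 = ⊥ := by
  simp [orderFn, ND]

theorem orderFn_eq_bot_iff (P : A) : W.orderFn Λ P = ⊥ ↔ P = 0 := by
  simp only [orderFn, Finset.sup_eq_bot_iff, WithBot.coe_ne_bot, imp_false]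
  rw [← Finset.eq_empty_iff_forall_notMem, ND, Finsupp.support_eq_empty,
    LinearEquiv.map_eq_zero_iff]

theorem orderFn_algebraMap {c : K} (hc : c ≠ 0) : W.orderFn Λ (algebraMap K A c) = 0 := by
  rw [Algebra.algebraMap_eq_smul_one, ← W.wmono_zero, orderFn, ND, ← W.basis_eq, map_smul,
    W.basis.repr_self, Finsupp.smul_single_one, Finsupp.support_single _ hc,
    Finset.sup_singleton, map_zero]
  rfl

theorem orderFn_add_le (P Q : A) : W.orderFn Λ (P + Q) ≤ max (W.orderFn Λ P) (W.orderFn Λ Q) := by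
  rw [orderFn, orderFn, orderFn, ← Finset.sup_union]
  exact Finset.sup_mono (by simpa only [ND, map_add] using Finsupp.support_add)

theorem orderFn_mul (hΛ : ∀ i, 0 ≤ Λ (Pi.single i 1, Pi.single i 1)) (P Q : A) :
    W.orderFn Λ (P * Q) = W.orderFn Λ P + W.orderFn Λ Q := by
  rcases eq_or_ne P 0 with rfl | hP
  · simp [orderFn_zero]
  rcases eq_or_ne Q 0 with rfl | hQ
  · simp [orderFn_zero]
  obtain ⟨a, ha⟩ := exists_isExp (W := W) (lexRefine_injective Λ) hP
  obtain ⟨b, hb⟩ := exists_isExp (W := W) (lexRefine_injective Λ) hQ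
  rw [orderFn_eq_of_isExp (ha.mul (fun i => lexRefine_pos Λ (hΛ i)) hb), orderFn_eq_of_isExp ha,
    orderFn_eq_of_isExp hb, map_add, WithBot.coe_add]

theorem isAdmissible_orderFn (hΛ : ∀ i, 0 ≤ Λ (Pi.single i 1, Pi.single i 1)) :
    IsAdmissible W (W.orderFn Λ) :=
  ⟨⟨fun _ => orderFn_algebraMap, orderFn_eq_bot_iff, orderFn_add_le, orderFn_mul hΛ⟩,
    fun _ _ => Finset.sup_congr rfl fun c _ => (orderFn_wmono c).symm⟩

theorem eq_orderFn_of_isAdmissible {δ : A → WithBot ℤ} (hδ : IsAdmissible W δ)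
    (hδΛ : ∀ c, δ (wmono W.x W.D c) = Λ c) : δ = W.orderFn Λ := by
  funext P
  rcases eq_or_ne P 0 with rfl | hP
  · rw [(hδ.1.bot_iff 0).mpr rfl, orderFn_zero]
  · exact (hδ.2 P hP).trans (Finset.sup_congr rfl fun c _ => hδΛ c)

end WeylData

def linForm {n : ℕ} (p q : Fin n → ℤ) : WMon n →+ ℤ where
  toFun ab := (∑ i, p i * (ab.1 i : ℤ)) + ∑ i, q i * (ab.2 i : ℤ)
  map_zero' := by simp
  map_add' a b := by
    simp only [Prod.fst_add, Prod.snd_add, Pi.add_apply, Nat.cast_add, mul_add,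
      Finset.sum_add_distrib]
    ring

theorem linForm_single_single {n : ℕ} (p q : Fin n → ℤ) (i : Fin n) :
    linForm p q (Pi.single i 1, Pi.single i 1) = p i + q i := by
  simp [linForm, Pi.single_apply]

/-- given a linear form `Λ` with integer coefficients `(p,q)`, `pᵢ+qᵢ ≥ 0`,
there is a unique admissible order function `δ_Λ` with `δ_Λ(x^α D^β) = Λ(α,β)`; it is
given by `δ_Λ(0) = -∞` and `δ_Λ(P) = max{Λ(α,β) : (α,β) ∈ N(P)}` for nonzero `P`. -/
theorem exists_unique_admissible (K : Type*) [Field K] (n : ℕ) (A : Type*) [Ring A]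
    [Algebra K A] (W : WeylData K n A) (p q : Fin n → ℤ) (hpq : ∀ i, 0 ≤ p i + q i) :
    (∃! δ : A → WithBot ℤ, IsAdmissible W δ ∧
      ∀ ab : WMon n, δ (wmono W.x W.D ab) =
        (((∑ i, p i * (ab.1 i : ℤ)) + ∑ i, q i * (ab.2 i : ℤ) : ℤ) : WithBot ℤ)) ∧
    ∀ δ : A → WithBot ℤ,
      (IsAdmissible W δ ∧ ∀ ab : WMon n, δ (wmono W.x W.D ab) =
        (((∑ i, p i * (ab.1 i : ℤ)) + ∑ i, q i * (ab.2 i : ℤ) : ℤ) : WithBot ℤ)) →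
      δ 0 = ⊥ ∧ ∀ P : A, P ≠ 0 → δ P = (ND W P).sup fun ab =>
        (((∑ i, p i * (ab.1 i : ℤ)) + ∑ i, q i * (ab.2 i : ℤ) : ℤ) : WithBot ℤ) := by
  have hΛ (i : Fin n) : 0 ≤ linForm p q (Pi.single i 1, Pi.single i 1) := by
    rw [linForm_single_single]; exact hpq i
  refine ⟨⟨W.orderFn (linForm p q), ⟨W.isAdmissible_orderFn hΛ, W.orderFn_wmono⟩,
    fun δ hδ => W.eq_orderFn_of_isAdmissible (Λ := linForm p q) hδ.1 hδ.2⟩, fun δ hδ => ?_⟩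
  obtain rfl := W.eq_orderFn_of_isAdmissible (Λ := linForm p q) hδ.1 hδ.2
  exact ⟨W.orderFn_zero, fun _ _ => rfl⟩
end

section
/- Let δ be the admissible order function on A_n(K) given by δ(x^α D^β) = β_n − α_n (the V-filtration order with respect to x_n = 0). The single operator P = 1 + x_n² D_n has principal symbol σ_δ(P) = 1, hence {P} is a δ-standard basis of the ideal I = A_n(K), but P does not generate A_n(K) as a left ideal (P is not a unit). Hence a δ-standard basis of an ideal need not be a generating system of the ideal. -/
/-!
Grade `A_n(K)` by the weight `β_n - α_n` of `x^α D^β`. Right multiplication by `x_n` lowers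
every weight by one and right multiplication by `D_n` raises it by one, both injectively, so
`R = x_n² D_n` lowers weights by exactly one. If `Q (1 + R) = 1`, then in `Q + Q R` the top-weight
part of `Q` survives, and so does `R` applied to the bottom-weight part of `Q`, one weight below
the bottom of `Q`. Both must lie in weight `0`, the weight of `1`, which is impossible.
-/
namespace Module.Basis

variable {K A ι : Type*} [CommRing K] [Ring A] [Algebra K A] (b : Module.Basis ι K A)

theorem repr_mul_apply (X R : A) (v : ι) :
    b.repr (X * R) v = ∑ u ∈ (b.repr X).support, b.repr X u * b.repr (b u * R) v := by
  conv_lhs => rw [← b.linearCombination_repr X]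
  simp [Finsupp.linearCombination_apply, Finsupp.sum, Finset.sum_mul]

theorem isRightRegular_of_triangular (R : A) (g : ι → ℕ) (s : ι → ι)
    (hs : ∀ u, b.repr (b u * R) (s u) = 1)
    (hlow : ∀ u u', u' ≠ u → b.repr (b u' * R) (s u) ≠ 0 → g u < g u') :
    IsRightRegular R := by
  refine isRightRegular_iff_left_eq_zero_of_mul.2 fun X hX => ?_
  by_contra hX0
  obtain ⟨u, hu, hmax⟩ := (b.repr X).support.exists_max_image g
    (Finsupp.support_nonempty_iff.2 (by simpa using hX0))
  have hcoeff : b.repr (X * R) (s u) = b.repr X u := by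
    rw [repr_mul_apply, Finset.sum_eq_single u, hs, mul_one]
    · intro u' hu' hne
      by_contra h
      exact absurd (hmax u' hu') (not_le.2 (hlow u u' hne (right_ne_zero_of_mul h)))
    · exact fun h => absurd hu h
  rw [hX, map_zero, Finsupp.zero_apply] at hcoeff
  exact Finsupp.mem_support_iff.1 hu hcoeff.symm

variable (w : ι → ℤ)

def ShiftsWeight (R : A) (d : ℤ) : Prop :=
  ∀ X v, v ∈ (b.repr (X * R)).support → ∃ u ∈ (b.repr X).support, w v = w u + d

variable {b w}

theorem ShiftsWeight.of_basis {R : A} {d : ℤ}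
    (h : ∀ u, ∀ v ∈ (b.repr (b u * R)).support, w v = w u + d) : b.ShiftsWeight w R d := by
  intro X v hv
  rw [Finsupp.mem_support_iff, repr_mul_apply] at hv
  obtain ⟨u, hu, huv⟩ := Finset.exists_ne_zero_of_sum_ne_zero hv
  exact ⟨u, hu, h u v (Finsupp.mem_support_iff.2 (right_ne_zero_of_mul huv))⟩

theorem ShiftsWeight.mul {R S : A} {d e : ℤ} (hR : b.ShiftsWeight w R d)
    (hS : b.ShiftsWeight w S e) : b.ShiftsWeight w (R * S) (d + e) := by
  intro X v hv
  rw [← mul_assoc] at hv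
  obtain ⟨u, hu, hvu⟩ := hS _ v hv
  obtain ⟨u', hu', huu'⟩ := hR X u hu
  exact ⟨u', hu', by rw [hvu, huu', add_assoc]⟩

theorem ShiftsWeight.repr_add_mul_of_isMax {R : A} {d : ℤ} (hR : b.ShiftsWeight w R d)
    (hd : d < 0) {X : A} {u : ι} (hmax : ∀ u' ∈ (b.repr X).support, w u' ≤ w u) :
    b.repr (X + X * R) u = b.repr X u := by
  rw [map_add, Finsupp.add_apply, add_eq_left, ← Finsupp.notMem_support_iff]
  intro hu
  obtain ⟨u', hu', hw⟩ := hR X u hu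
  linarith [hmax u' hu']

theorem ShiftsWeight.exists_mem_support_mul {R : A} {d : ℤ}
    (hR : b.ShiftsWeight w R d) (hreg : IsRightRegular R) {X : A} {m : ℤ}
    (hm : ∃ u ∈ (b.repr X).support, w u = m) :
    ∃ v ∈ (b.repr (X * R)).support, w v = m + d := by
  classical
  -- only the weight-`m` part `Y` of `X = Y + Z` contributes to weight `m + d` of `X * R`
  set Y := b.repr.symm ((b.repr X).filter (w · = m))
  set Z := b.repr.symm ((b.repr X).filter (¬ w · = m))
  have hXYZ : X = Y + Z := by
    rw [← map_add, Finsupp.filter_add_filter_not, LinearEquiv.symm_apply_apply]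
  have hY : Y ≠ 0 := by
    obtain ⟨u, hu, rfl⟩ := hm
    intro h0
    have := congrArg (fun y => b.repr y u) h0
    simp [Y, Finsupp.mem_support_iff.1 hu] at this
  have hYR : Y * R ≠ 0 := fun h => hY (isRightRegular_iff_left_eq_zero_of_mul.1 hreg Y h)
  obtain ⟨v, hv⟩ := Finsupp.support_nonempty_iff.2 (b.repr.map_ne_zero_iff.2 hYR)
  have hwv : w v = m + d := by
    obtain ⟨u, hu, hvu⟩ := hR Y v hv
    simp only [Y, LinearEquiv.apply_symm_apply, Finsupp.support_filter, Finset.mem_filter] at hu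
    rw [hvu, hu.2]
  have hZv : b.repr (Z * R) v = 0 := by
    rw [← Finsupp.notMem_support_iff]
    intro hvZ
    obtain ⟨u, hu, hvu⟩ := hR Z v hvZ
    simp only [Z, LinearEquiv.apply_symm_apply, Finsupp.support_filter, Finset.mem_filter] at hu
    exact hu.2 (by omega)
  refine ⟨v, ?_, hwv⟩
  rwa [hXYZ, add_mul, map_add, Finsupp.mem_support_iff, Finsupp.add_apply, hZv, add_zero,
    ← Finsupp.mem_support_iff]

theorem ShiftsWeight.mul_one_add_ne_one [Nontrivial A] {R : A} {d : ℤ}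
    (hR : b.ShiftsWeight w R d) (hd : d < 0) (hreg : IsRightRegular R)
    (h1 : ∀ v ∈ (b.repr 1).support, w v = 0) (Q : A) : Q * (1 + R) ≠ 1 := by
  intro h
  rw [mul_add, mul_one] at h
  have hQ : (b.repr Q).support.Nonempty := by
    refine Finsupp.support_nonempty_iff.2 (b.repr.map_ne_zero_iff.2 ?_)
    rintro rfl
    simp at h
  obtain ⟨u, hu, hmax⟩ := (b.repr Q).support.exists_max_image w hQ
  obtain ⟨u', hu', hmin⟩ := (b.repr Q).support.exists_min_image w hQ
  have hwu : w u = 0 := by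
    refine h1 u ?_
    rw [← h, Finsupp.mem_support_iff, hR.repr_add_mul_of_isMax hd hmax]
    exact Finsupp.mem_support_iff.1 hu
  obtain ⟨v, hv, hwv⟩ := hR.exists_mem_support_mul hreg ⟨u', hu', rfl⟩
  have hQv : b.repr Q v = 0 := by
    rw [← Finsupp.notMem_support_iff]
    exact fun hvQ => by linarith [hmin v hvQ]
  have hwv0 : w v = 0 := by
    refine h1 v ?_
    rwa [← h, map_add, Finsupp.mem_support_iff, Finsupp.add_apply, hQv, zero_add,
      ← Finsupp.mem_support_iff]
  linarith [hmax u' hu']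

end Module.Basis

/-- The weight `β_n - α_n` of `x^α D^β` defining the `V`-filtration along `x_n = 0`. -/
def vWeight {n : ℕ} (ab : WMon (n + 1)) : ℤ := ab.2 (Fin.last n) - ab.1 (Fin.last n)

namespace WeylData

variable {K : Type*} [Field K] {n : ℕ} {A : Type*} [Ring A] [Algebra K A]

theorem ND_basis (W : WeylData K n A) (ab : WMon n) : ND W (W.basis ab) = {ab} := by
  rw [ND, W.basis.repr_self, Finsupp.support_single _ one_ne_zero]

theorem isExp_basis (W : WeylData K n A) (rd : WMon n → WMon n → Prop) (ab : WMon n) :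
    IsExp W rd (W.basis ab) ab := by
  simp [IsExp, ND_basis]

variable (W : WeylData K (n + 1) A)

local notation "e" => (Pi.single (Fin.last n) 1 : Fin (n + 1) → ℕ)

theorem wmono_eq_mul_last (x D : Fin (n + 1) → A) (ab : WMon (n + 1)) :
    wmono x D ab =
      ((List.ofFn fun i : Fin n => x i.castSucc ^ ab.1 i.castSucc).prod
          * x (Fin.last n) ^ ab.1 (Fin.last n)) *
      ((List.ofFn fun i : Fin n => D i.castSucc ^ ab.2 i.castSucc).prod
          * D (Fin.last n) ^ ab.2 (Fin.last n)) := by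
  rw [wmono, List.ofFn_succ', List.ofFn_succ', List.prod_concat, List.prod_concat]

theorem D_last_pow_mul_x_last (k : ℕ) :
    W.D (Fin.last n) ^ k * W.x (Fin.last n) =
      W.x (Fin.last n) * W.D (Fin.last n) ^ k + k • W.D (Fin.last n) ^ (k - 1) := by
  induction k with
  | zero => simp
  | succ k ih =>
    have hDx : W.D (Fin.last n) * W.x (Fin.last n) = W.x (Fin.last n) * W.D (Fin.last n) + 1 := by
      simpa using W.hDx (Fin.last n) (Fin.last n)
    have hk : k • (W.D (Fin.last n) ^ (k - 1) * W.D (Fin.last n)) =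
        k • W.D (Fin.last n) ^ k := by
      cases k <;> simp [pow_succ]
    rw [pow_succ, mul_assoc, hDx, mul_add, mul_one, ← mul_assoc, ih, add_mul, mul_assoc,
      ← pow_succ, smul_mul_assoc, hk, Nat.add_sub_cancel, succ_nsmul, add_assoc]

theorem commute_x_last_prod_D_castSucc (β : Fin (n + 1) → ℕ) :
    Commute (W.x (Fin.last n))
      (List.ofFn fun i : Fin n => W.D i.castSucc ^ β i.castSucc).prod := by
  refine Commute.list_prod_right _ _ fun a ha => ?_
  obtain ⟨i, rfl⟩ := List.mem_ofFn.1 ha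
  have h := W.hDx i.castSucc (Fin.last n)
  rw [if_neg (Fin.castSucc_lt_last i).ne, add_zero] at h
  exact (Commute.pow_left h _).symm

theorem wmono_mul_D_last (ab : WMon (n + 1)) :
    wmono W.x W.D ab * W.D (Fin.last n) = wmono W.x W.D (ab.1, ab.2 + e) := by
  simp only [wmono_eq_mul_last, Pi.add_apply, Pi.single_apply, Fin.castSucc_ne_last,
    if_false, add_zero, if_true, pow_succ, mul_assoc]

theorem wmono_mul_x_last (ab : WMon (n + 1)) :
    wmono W.x W.D ab * W.x (Fin.last n) =
      wmono W.x W.D (ab.1 + e, ab.2) + ab.2 (Fin.last n) • wmono W.x W.D (ab.1, ab.2 - e) := by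
  simp only [wmono_eq_mul_last, Pi.add_apply, Pi.sub_apply, Pi.single_apply, Fin.castSucc_ne_last,
    if_false, add_zero, tsub_zero, if_true]
  rw [mul_assoc _ (_ * _) (W.x _), mul_assoc _ (_ ^ _) (W.x _), D_last_pow_mul_x_last, mul_add,
    ← mul_assoc _ (W.x _), ← (W.commute_x_last_prod_D_castSucc ab.2).eq, mul_smul_comm,
    mul_add, mul_smul_comm, pow_succ]
  noncomm_ring

theorem repr_basis_mul_D_last (ab : WMon (n + 1)) :
    W.basis.repr (W.basis ab * W.D (Fin.last n)) = Finsupp.single (ab.1, ab.2 + e) 1 := by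
  rw [W.basis_eq, wmono_mul_D_last, ← W.basis_eq, W.basis.repr_self]

/-- When `β_n = 0` the truncated `β - e` equals `β`, but then the coefficient vanishes. -/
theorem repr_basis_mul_x_last (ab : WMon (n + 1)) :
    W.basis.repr (W.basis ab * W.x (Fin.last n)) =
      Finsupp.single (ab.1 + e, ab.2) 1 +
        Finsupp.single (ab.1, ab.2 - e) (ab.2 (Fin.last n) : K) := by
  rw [W.basis_eq, wmono_mul_x_last, ← W.basis_eq, ← W.basis_eq, map_add, map_nsmul,
    W.basis.repr_self, W.basis.repr_self, Finsupp.smul_single, nsmul_one]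

theorem shiftsWeight_D_last : W.basis.ShiftsWeight vWeight (W.D (Fin.last n)) 1 :=
  .of_basis fun ab v hv => by
    rw [repr_basis_mul_D_last, Finsupp.support_single _ one_ne_zero,
      Finset.mem_singleton] at hv
    simp [hv, vWeight]
    ring

theorem shiftsWeight_x_last : W.basis.ShiftsWeight vWeight (W.x (Fin.last n)) (-1) :=
  .of_basis fun ab v hv => by
    rw [repr_basis_mul_x_last] at hv
    rcases Finset.mem_union.1 (Finsupp.support_add hv) with hv | hv
    · rw [Finset.mem_singleton.1 (Finsupp.support_single_subset hv)]
      simp [vWeight]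
      ring
    · obtain ⟨rfl, hβ⟩ := (Finsupp.mem_support_single _ _ _).1 hv
      have : ab.2 (Fin.last n) ≠ 0 := by rintro h; simp [h] at hβ
      simp [vWeight]
      omega

theorem isRightRegular_D_last : IsRightRegular (W.D (Fin.last n)) :=
  W.basis.isRightRegular_of_triangular _ (fun _ => 0) (fun ab => (ab.1, ab.2 + e))
    (fun ab => by simp [repr_basis_mul_D_last])
    (fun ab ab' hne h => by
      simp [repr_basis_mul_D_last, Finsupp.single_apply] at h
      exact absurd (Prod.ext h.1 h.2) hne)

theorem isRightRegular_x_last : IsRightRegular (W.x (Fin.last n)) :=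
  W.basis.isRightRegular_of_triangular _ (fun ab => ab.1 (Fin.last n)) (fun ab => (ab.1 + e, ab.2))
    (fun ab => by simp [repr_basis_mul_x_last])
    (fun ab ab' hne h => by
      have hne' : ¬(ab'.1 = ab.1 ∧ ab'.2 = ab.2) := fun h' => hne (Prod.ext h'.1 h'.2)
      simp only [repr_basis_mul_x_last, Finsupp.add_apply, Finsupp.single_apply, Prod.mk.injEq,
        add_left_inj, hne', if_false, zero_add, ite_ne_right_iff] at h
      simp [h.1.1])

theorem repr_one : W.basis.repr 1 = Finsupp.single 0 1 := by
  rw [← W.basis.repr_self, W.basis_eq]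
  simp [wmono]

theorem repr_one_add_x_last_sq_mul_D_last :
    W.basis.repr (1 + W.x (Fin.last n) ^ 2 * W.D (Fin.last n)) =
      Finsupp.single 0 1 + Finsupp.single (Pi.single (Fin.last n) 2, e) 1 := by
  have hmono : W.x (Fin.last n) ^ 2 * W.D (Fin.last n) = W.basis (Pi.single (Fin.last n) 2, e) := by
    simp [W.basis_eq, wmono_eq_mul_last, Fin.castSucc_ne_last]
  rw [map_add, repr_one, hmono, W.basis.repr_self]

theorem mul_one_add_x_last_sq_mul_D_last_ne_one (Q : A) :
    Q * (1 + W.x (Fin.last n) ^ 2 * W.D (Fin.last n)) ≠ 1 := by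
  have : Nontrivial A := ⟨⟨_, _, W.basis.ne_zero 0⟩⟩
  have hshift : W.basis.ShiftsWeight vWeight (W.x (Fin.last n) ^ 2 * W.D (Fin.last n)) (-1) := by
    simpa [sq] using (W.shiftsWeight_x_last.mul W.shiftsWeight_x_last).mul W.shiftsWeight_D_last
  refine hshift.mul_one_add_ne_one (by norm_num)
    ((W.isRightRegular_x_last.pow 2).mul W.isRightRegular_D_last) (fun v hv => ?_) Q
  rw [repr_one] at hv
  rw [Finset.mem_singleton.1 (Finsupp.support_single_subset hv)]
  rfl

end WeylData

theorem standard_basis_not_generating_general (K : Type*) [Field K] (n : ℕ) (A : Type*) [Ring A]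
    [Algebra K A] (W : WeylData K (n + 1) A)
    (r : WMon (n + 1) → WMon (n + 1) → Prop)
    (δ : A → WithBot ℤ)
    (hδ : ∀ P : A, δ P = (ND W P).sup fun ab =>
      (((ab.2 (Fin.last n) : ℤ) - (ab.1 (Fin.last n) : ℤ) : ℤ) : WithBot ℤ)) :
    IsExp W (rdelta W δ r) (1 + W.x (Fin.last n) ^ 2 * W.D (Fin.last n)) 0 ∧
    W.basis.repr (1 + W.x (Fin.last n) ^ 2 * W.D (Fin.last n)) 0 = 1 ∧
    {v : WMon (n + 1) | ∃ Q : A, Q ≠ 0 ∧ IsExp W (rdelta W δ r) Q v} =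
      {v : WMon (n + 1) | ∃ γ : WMon (n + 1), v = 0 + γ} ∧
    Ideal.span {1 + W.x (Fin.last n) ^ 2 * W.D (Fin.last n)} ≠ (⊤ : Ideal A) ∧
    ¬ IsUnit (1 + W.x (Fin.last n) ^ 2 * W.D (Fin.last n)) := by
  have hδmono (ab : WMon (n + 1)) : δ (wmono W.x W.D ab) = vWeight ab := by
    rw [hδ, ← W.basis_eq, WeylData.ND_basis, Finset.sup_singleton, vWeight]
  have hne : (0 : WMon (n + 1)) ≠ (Pi.single (Fin.last n) 2, Pi.single (Fin.last n) 1) := by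
    intro h
    simpa using congrFun (congrArg Prod.snd h) (Fin.last n)
  have hND : ND W (1 + W.x (Fin.last n) ^ 2 * W.D (Fin.last n)) =
      {0, (Pi.single (Fin.last n) 2, Pi.single (Fin.last n) 1)} := by
    rw [ND, W.repr_one_add_x_last_sq_mul_D_last,
      Finsupp.support_single_add_single hne one_ne_zero one_ne_zero]
  refine ⟨⟨by simp [hND], fun f hf hf0 => ?_⟩,
    by simp [W.repr_one_add_x_last_sq_mul_D_last, hne], ?_, fun htop => ?_, fun hunit => ?_⟩
  · obtain rfl : f = _ := by simpa [hND, hf0] using hf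
    left
    simp [hδmono, vWeight]
  · ext v
    exact ⟨fun _ => ⟨v, (zero_add v).symm⟩,
      fun _ => ⟨W.basis v, W.basis.ne_zero v, W.isExp_basis _ v⟩⟩
  · have h1 : (1 : A) ∈ Ideal.span {1 + W.x (Fin.last n) ^ 2 * W.D (Fin.last n)} :=
      htop ▸ Submodule.mem_top
    obtain ⟨Q, hQ⟩ := Submodule.mem_span_singleton.1 h1
    exact W.mul_one_add_x_last_sq_mul_D_last_ne_one Q hQ
  · obtain ⟨Q, hQ⟩ := hunit.exists_left_inv
    exact W.mul_one_add_x_last_sq_mul_D_last_ne_one Q hQ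

/-- for the `V`-filtration order `δ(x^α D^β) = β_n - α_n` w.r.t. `x_n = 0`,
the operator `P = 1 + x_n² D_n` has `exp_δ(P) = 0` with leading coefficient `1` (i.e.
`σ_δ(P) = 1`), so `{P}` is a `δ`-standard basis of the ideal `I = A_n(K)` (whose set of
`δ`-exponents is all of `0 + ℕ^{2n}`), yet `P` does not generate `A_n(K)` as a left
ideal (`P` is not a unit). -/
theorem standard_basis_not_generating (K : Type*) [Field K] (n : ℕ) (A : Type*) [Ring A]
    [Algebra K A] (W : WeylData K (n + 1) A)
    (r : WMon (n + 1) → WMon (n + 1) → Prop) (hr : WellMonomialOrdering r)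
    (δ : A → WithBot ℤ)
    (hδ : ∀ P : A, δ P = (ND W P).sup fun ab =>
      (((ab.2 (Fin.last n) : ℤ) - (ab.1 (Fin.last n) : ℤ) : ℤ) : WithBot ℤ)) :
    IsExp W (rdelta W δ r) (1 + W.x (Fin.last n) ^ 2 * W.D (Fin.last n)) 0 ∧
    W.basis.repr (1 + W.x (Fin.last n) ^ 2 * W.D (Fin.last n)) 0 = 1 ∧
    {v : WMon (n + 1) | ∃ Q : A, Q ≠ 0 ∧ IsExp W (rdelta W δ r) Q v} =
      {v : WMon (n + 1) | ∃ γ : WMon (n + 1), v = 0 + γ} ∧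
    Ideal.span {1 + W.x (Fin.last n) ^ 2 * W.D (Fin.last n)} ≠ (⊤ : Ideal A) ∧
    ¬ IsUnit (1 + W.x (Fin.last n) ^ 2 * W.D (Fin.last n)) :=
  standard_basis_not_generating_general K n A W r δ hδ
end
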